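/- The minimum sum-rank distance of the s-interleaved linearized Reed–Solomon code equals n − k + 1; that is, the minimum of wt_ΣR(M·λ_k(β)_a⃗) over all nonzero M ∈ F^(s×k) is exactly n − k + 1. -/

import Mathlib

/-!
Row `m` of a codeword is the evaluation of the skew polynomial `f = ∑ m_j X^j ∈ F[X; σ]`,
of degree `< k`, at the operators `D_{a_i} b = σ(b) a_i` on the blocks of `β`. As each block
of `β` is `K`-linearly independent, rank–nullity gives `wt_ΣR = n - ∑ᵢ dim Uᵢ`, where `Uᵢ` is
the space of roots of `f(D_{a_i})` in the span of the `i`-th block.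

The root bound `∑ᵢ dim Uᵢ < k` for `f ≠ 0` goes by induction on `k`: for a nonzero root
`b ∈ U_t` write `f = g·(X - c) + r` with `c = σ(b) a_t / b`; then `r = 0`, and `D_{a_i} - c`
maps `Uᵢ` into the roots of `g`, injectively for `i ≠ t` (the `a_i` are not σ-conjugate) and
with kernel `K b` for `i = t` (the fixed field of σ is `K`).

Conversely, a nonzero `f` vanishing at `k - 1` entries of `β` has `∑ᵢ dim Uᵢ ≥ k - 1`. The
weight of a codeword dominates that of each row, with equality for a single nonzero row.
-/

namespace Stmt2

/-- `genNorm σ a i = σ^(i-1)(a) ⋯ σ(a) · a`, the generalized power function `N_i(a)`. -/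
def genNorm {F : Type} [Field F] (σ : F ≃+* F) (a : F) : ℕ → F
  | 0 => 1
  | i + 1 => (⇑σ)^[i] a * genNorm σ a i

/-- Generalized operator `D_a^i(b) = σ^i(b) · N_i(a)` for `i ∈ ℕ`. -/
def opev {F : Type} [Field F] (σ : F ≃+* F) (a b : F) (i : ℕ) : F :=
  (⇑σ)^[i] b * genNorm σ a i

/-- `b` is σ-conjugate to `a`, i.e. `b = σ(c)·a·c⁻¹` for some nonzero `c`. -/
def SConj {F : Type} [Field F] (σ : F ≃+* F) (a b : F) : Prop :=
  ∃ c : F, c ≠ 0 ∧ b = σ c * a * c⁻¹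

/-- σ-generalized Moore matrix `λ_d(x)_a⃗` w.r.t. the length partition `nn`:
its row `r` applies `D_{a_i}^r` entrywise to the `i`-th block of `x`. -/
def moore {F : Type} [Field F] (σ : F ≃+* F) {ℓ : ℕ} (nn : Fin ℓ → ℕ) (aa : Fin ℓ → F)
    (d : ℕ) (x : (Σ i : Fin ℓ, Fin (nn i)) → F) :
    Matrix (Fin d) (Σ i : Fin ℓ, Fin (nn i)) F :=
  Matrix.of fun r p => opev σ (aa p.1) (x p) (r : ℕ)

/-- `λ_d(X)_a⃗` for a matrix `X`: the stack of `λ_d(x_j)_a⃗` over the rows of `X`. -/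
def mooreMat {F : Type} [Field F] (σ : F ≃+* F) {ℓ : ℕ} (nn : Fin ℓ → ℕ) (aa : Fin ℓ → F)
    {s : ℕ} (d : ℕ) (X : Matrix (Fin s) (Σ i : Fin ℓ, Fin (nn i)) F) :
    Matrix (Fin s × Fin d) (Σ i : Fin ℓ, Fin (nn i)) F :=
  Matrix.of fun r p => opev σ (aa p.1) (X r.1 p) (r.2 : ℕ)

/-- `rk_q` of a vector: the `K`-dimension of the `K`-span of its entries. -/
noncomputable def rkq (K : Type) [Field K] {F : Type} [Field F] [Algebra K F] {ι : Type}
    (v : ι → F) : ℕ :=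
  Module.finrank K (Submodule.span K (Set.range v))

/-- `rk_q` of a matrix: the `K`-dimension of the `K`-span of its columns. -/
noncomputable def rkqMat (K : Type) [Field K] {F : Type} [Field F] [Algebra K F]
    {s : ℕ} {ι : Type} (X : Matrix (Fin s) ι F) : ℕ :=
  Module.finrank K (Submodule.span K (Set.range fun j : ι => fun r : Fin s => X r j))

/-- Sum-rank weight of a blockwise vector. -/
noncomputable def wtV (K : Type) [Field K] {F : Type} [Field F] [Algebra K F] {ℓ : ℕ}
    (nn : Fin ℓ → ℕ) (x : (Σ i : Fin ℓ, Fin (nn i)) → F) : ℕ :=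
  ∑ i, rkq K fun μ : Fin (nn i) => x ⟨i, μ⟩

/-- Sum-rank weight of a blockwise matrix. -/
noncomputable def wtM (K : Type) [Field K] {F : Type} [Field F] [Algebra K F] {s ℓ : ℕ}
    (nn : Fin ℓ → ℕ) (X : Matrix (Fin s) (Σ i : Fin ℓ, Fin (nn i)) F) : ℕ :=
  ∑ i, rkqMat K (Matrix.of fun (r : Fin s) (μ : Fin (nn i)) => X r ⟨i, μ⟩)

/-- Codeword `C(M) = M · λ_k(β)_a⃗` of the `s`-interleaved linearized Reed–Solomon code. -/
def codeword {F : Type} [Field F] (σ : F ≃+* F) {ℓ : ℕ} (nn : Fin ℓ → ℕ) (aa : Fin ℓ → F)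
    (β : (Σ i : Fin ℓ, Fin (nn i)) → F) {s : ℕ} (k : ℕ) (M : Matrix (Fin s) (Fin k) F) :
    Matrix (Fin s) (Σ i : Fin ℓ, Fin (nn i)) F :=
  M * moore σ nn aa k β

open Matrix

theorem finrank_map_add_finrank_ker_inf {K V W : Type} [Field K] [AddCommGroup V] [Module K V]
    [AddCommGroup W] [Module K W] (φ : V →ₗ[K] W) (U : Submodule K V)
    [FiniteDimensional K U] :
    Module.finrank K (U.map φ) + Module.finrank K ↥(LinearMap.ker φ ⊓ U)
      = Module.finrank K U := by
  have hrn := (φ.domRestrict U).finrank_range_add_finrank_ker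
  have hker : Submodule.comap U.subtype (LinearMap.ker φ)
      = Submodule.comap U.subtype (LinearMap.ker φ ⊓ U) := by
    rw [Submodule.comap_inf, Submodule.comap_subtype_self, inf_top_eq]
  rwa [LinearMap.range_domRestrict, LinearMap.ker_domRestrict, hker,
    (Submodule.comapSubtypeEquivOfLe inf_le_right).finrank_eq] at hrn

theorem Matrix.exists_ne_zero_vecMul_eq_zero_on {R κ ι : Type} [Field R] [Fintype κ]
    (N : Matrix κ ι R) (S : Finset ι) (hS : S.card < Fintype.card κ) :
    ∃ m : κ → R, m ≠ 0 ∧ ∀ p ∈ S, (m ᵥ* N) p = 0 := by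
  let restrict : (κ → R) →ₗ[R] (S → R) :=
    LinearMap.funLeft R R (Subtype.val : S → ι) ∘ₗ N.vecMulLinear
  have hker : LinearMap.ker restrict ≠ ⊥ :=
    LinearMap.ker_ne_bot_of_finrank_lt (by simpa using hS)
  obtain ⟨m, hm, hm0⟩ := (Submodule.ne_bot_iff _).mp hker
  exact ⟨m, hm0, fun p hp => congr_fun (LinearMap.mem_ker.mp hm) ⟨p, hp⟩⟩

theorem Matrix.of_single_mul {R : Type} [Semiring R] {s k : ℕ} {ι : Type} (r : Fin s)
    (m : Fin k → R) (N : Matrix (Fin k) ι R) :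
    Matrix.of (Pi.single r m) * N = Matrix.of (Pi.single r (m ᵥ* N)) := by
  ext r' p
  rw [Matrix.mul_apply_eq_vecMul, Matrix.of_apply]
  change ((Pi.single r m : Fin s → Fin k → R) r' ᵥ* N) p = _
  by_cases h : r' = r
  · subst h; simp
  · simp [h]

section SkewPolynomial

variable {K F : Type} [Field K] [Field F] [Algebra K F] (σ : F ≃ₐ[K] F)

def skewOp (a : F) : Module.End K F :=
  LinearMap.mulRight K a ∘ₗ σ.toLinearMap

theorem skewOp_apply (a b : F) : skewOp σ a b = σ b * a := rfl

theorem opev_eq_skewOp_pow_apply (a b : F) (j : ℕ) :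
    opev (σ : F ≃+* F) a b j = (skewOp σ a ^ j) b := by
  induction j generalizing b with
  | zero => simp [opev, genNorm]
  | succ j ih =>
    rw [pow_succ, Module.End.mul_apply, skewOp_apply, ← ih, opev, opev, genNorm,
      Function.iterate_succ_apply, iterate_map_mul]
    simp only [AlgEquiv.coe_ringEquiv]
    ring

theorem skewOp_pow_mul_apply (a c b : F) (j : ℕ) :
    (skewOp σ a ^ j) (c * b) = (⇑σ)^[j] c * (skewOp σ a ^ j) b := by
  induction j with
  | zero => simp
  | succ j ih =>
    rw [pow_succ', Module.End.mul_apply, Module.End.mul_apply, ih, skewOp_apply, skewOp_apply,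
      map_mul, Function.iterate_succ_apply']
    ring

-- `f(D_a)` for the skew polynomial `f = ∑_{j<k} m j • X^j ∈ F[X; σ]`.
def skewEval (a : F) (m : ℕ → F) (k : ℕ) : Module.End K F :=
  ∑ j ∈ Finset.range k, LinearMap.mulLeft K (m j) * skewOp σ a ^ j

theorem skewEval_apply (a : F) (m : ℕ → F) (k : ℕ) (b : F) :
    skewEval σ a m k b = ∑ j ∈ Finset.range k, m j * (skewOp σ a ^ j) b := by
  simp [skewEval, LinearMap.sum_apply]

-- Coefficients of the right quotient of `∑_{j≤k} m j • X^j` by `X - c` in `F[X; σ]`;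
-- `skewEval_succ_apply` is the division with remainder `m 0 + skewQuot σ m c k 0 * c`.
def skewQuot (m : ℕ → F) (c : F) (k j : ℕ) : F :=
  if j < k then m (j + 1) + (⇑σ)^[j + 1] c * skewQuot m c k (j + 1) else 0
termination_by k - j

theorem skewQuot_of_le (m : ℕ → F) (c : F) {k j : ℕ} (h : k ≤ j) : skewQuot σ m c k j = 0 := by
  rw [skewQuot, if_neg (not_lt.mpr h)]

theorem skewQuot_of_lt (m : ℕ → F) (c : F) {k j : ℕ} (h : j < k) :
    skewQuot σ m c k j = m (j + 1) + (⇑σ)^[j + 1] c * skewQuot σ m c k (j + 1) := by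
  rw [skewQuot, if_pos h]

theorem skewEval_succ_apply (a c : F) (m : ℕ → F) (k : ℕ) (b : F) :
    skewEval σ a m (k + 1) b
      = skewEval σ a (skewQuot σ m c k) k (skewOp σ a b - c * b)
        + (m 0 + skewQuot σ m c k 0 * c) * b := by
  have hquot_top := skewQuot_of_le σ m c (le_refl k)
  have hquot_rec : ∀ j < k,
      skewQuot σ m c k j = m (j + 1) + (⇑σ)^[j + 1] c * skewQuot σ m c k (j + 1) :=
    fun _ => skewQuot_of_lt σ m c
  set g := skewQuot σ m c k
  set T := skewOp σ a
  have hcoeff : ∀ j ∈ Finset.range k,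
      m (j + 1) * (T ^ (j + 1)) b
        = g j * (T ^ (j + 1)) b - g (j + 1) * (⇑σ)^[j + 1] c * (T ^ (j + 1)) b := by
    intro j hj
    rw [hquot_rec j (Finset.mem_range.mp hj)]
    ring
  have hshift : ∀ j ∈ Finset.range k, g j * (T ^ j) (T b - c * b)
      = g j * (T ^ (j + 1)) b - g j * (⇑σ)^[j] c * (T ^ j) b := by
    intro j _
    rw [map_sub, skewOp_pow_mul_apply, pow_succ, Module.End.mul_apply]
    ring
  have htelescope : ∑ j ∈ Finset.range k, g j * (⇑σ)^[j] c * (T ^ j) b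
      = ∑ j ∈ Finset.range k, g (j + 1) * (⇑σ)^[j + 1] c * (T ^ (j + 1)) b + g 0 * c * b := by
    have hsucc := Finset.sum_range_succ' (fun j => g j * (⇑σ)^[j] c * (T ^ j) b) k
    rw [Finset.sum_range_succ, hquot_top, zero_mul, zero_mul, add_zero] at hsucc
    simpa using hsucc
  rw [skewEval_apply, skewEval_apply, Finset.sum_range_succ', Finset.sum_congr rfl hcoeff,
    Finset.sum_congr rfl hshift, Finset.sum_sub_distrib, Finset.sum_sub_distrib, htelescope]
  simp only [pow_zero, Module.End.one_apply]
  ring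

theorem coeff_eq_zero_of_skewQuot_eq_zero (m : ℕ → F) (c : F) {k : ℕ}
    (hquot : ∀ j < k, skewQuot σ m c k j = 0) (hrem : m 0 + skewQuot σ m c k 0 * c = 0) :
    ∀ j < k + 1, m j = 0 := by
  have hquot' : ∀ j, skewQuot σ m c k j = 0 := fun j =>
    (lt_or_ge j k).elim (hquot j) (skewQuot_of_le σ m c)
  rintro (_ | j) hj
  · simpa [hquot' 0] using hrem
  · have := skewQuot_of_lt σ m c (Nat.lt_of_succ_lt_succ hj)
    rw [hquot' j, hquot' (j + 1), mul_zero, add_zero] at this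
    exact this.symm

theorem ker_skewOp_sub_mulLeft_le (hfix : ∀ x, σ x = x → x ∈ Set.range (algebraMap K F))
    {a b : F} (ha : a ≠ 0) (hb : b ≠ 0) :
    LinearMap.ker (skewOp σ a - LinearMap.mulLeft K (σ b * a / b)) ≤ K ∙ b := by
  intro x hx
  have hx : σ x * a = σ b * a / b * x := by
    simpa [skewOp_apply, sub_eq_zero] using hx
  have hσb : σ b ≠ 0 := by simpa using hb
  have hfixed : σ (x / b) = x / b := by
    rw [map_div₀, div_eq_div_iff hσb hb]
    field_simp at hx
    linear_combination hx
  obtain ⟨u, hu⟩ := hfix _ hfixed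
  refine Submodule.mem_span_singleton.mpr ⟨u, ?_⟩
  rw [Algebra.smul_def, hu, div_mul_cancel₀ x hb]

theorem ker_skewOp_sub_mulLeft_eq_bot {a a' b : F} (h : ¬ SConj (σ : F ≃+* F) a a')
    (hb : b ≠ 0) : LinearMap.ker (skewOp σ a' - LinearMap.mulLeft K (σ b * a / b)) = ⊥ := by
  refine (Submodule.eq_bot_iff _).mpr fun x hx => ?_
  by_contra hx0
  have hx : σ x * a' = σ b * a / b * x := by
    simpa [skewOp_apply, sub_eq_zero] using hx
  have hσx : σ x ≠ 0 := by simpa using hx0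
  refine h ⟨b / x, div_ne_zero hb hx0, ?_⟩
  rw [AlgEquiv.coe_ringEquiv, map_div₀]
  field_simp at hx ⊢
  linear_combination hx

theorem coeff_eq_zero_of_le_sum_finrank (hfix : ∀ x, σ x = x → x ∈ Set.range (algebraMap K F))
    {ι : Type} [Fintype ι] (a : ι → F) (ha0 : ∀ i, a i ≠ 0)
    (ha : Pairwise fun i j => ¬ SConj (σ : F ≃+* F) (a i) (a j))
    (k : ℕ) (m : ℕ → F) (U : ι → Submodule K F) [∀ i, FiniteDimensional K (U i)]
    (hU : ∀ i, U i ≤ LinearMap.ker (skewEval σ (a i) m k))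
    (hk : k ≤ ∑ i, Module.finrank K (U i)) :
    ∀ j < k, m j = 0 := by
  classical
  induction k generalizing m U with
  | zero => simp
  | succ k ih =>
    obtain ⟨t, b, hbU, hb⟩ : ∃ t, ∃ b ∈ U t, b ≠ 0 := by
      by_contra! h
      have hzero : ∀ i, Module.finrank K (U i) = 0 := fun i =>
        Submodule.finrank_eq_zero.mpr ((Submodule.eq_bot_iff _).mpr (h i))
      simp [hzero] at hk
    set c := σ b * a t / b
    let φ i := skewOp σ (a i) - LinearMap.mulLeft K c
    have hφb : skewOp σ (a t) b - c * b = 0 := by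
      rw [skewOp_apply, div_mul_cancel₀ _ hb, sub_self]
    have hrem : m 0 + skewQuot σ m c k 0 * c = 0 := by
      have hdiv := skewEval_succ_apply σ (a t) c m k b
      rw [hU t hbU, hφb, map_zero, zero_add] at hdiv
      exact (mul_eq_zero.mp hdiv.symm).resolve_right hb
    have hU' : ∀ i, (U i).map (φ i) ≤ LinearMap.ker (skewEval σ (a i) (skewQuot σ m c k) k) := by
      rintro i _ ⟨b', hb', rfl⟩
      have hdiv := skewEval_succ_apply σ (a i) c m k b'
      rw [hU i hb', hrem, zero_mul, add_zero] at hdiv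
      exact hdiv.symm
    have hdim : ∀ i, Module.finrank K (U i)
        ≤ Module.finrank K ((U i).map (φ i)) + if i = t then 1 else 0 := by
      intro i
      have hrn := finrank_map_add_finrank_ker_inf (φ i) (U i)
      split_ifs with hit
      · subst hit
        have hker : Module.finrank K ↥(LinearMap.ker (φ i) ⊓ U i) ≤ 1 :=
          (Submodule.finrank_mono (inf_le_left.trans
            (ker_skewOp_sub_mulLeft_le σ hfix (ha0 i) hb))).trans (finrank_span_singleton hb).le
        omega
      · rw [ker_skewOp_sub_mulLeft_eq_bot σ (ha (Ne.symm hit)) hb, bot_inf_eq, finrank_bot]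
          at hrn
        omega
    have hk' : k ≤ ∑ i, Module.finrank K ((U i).map (φ i)) := by
      have := hk.trans (Finset.sum_le_sum fun i _ => hdim i)
      rw [Finset.sum_add_distrib, Finset.sum_ite_eq' Finset.univ t] at this
      simpa using this
    exact coeff_eq_zero_of_skewQuot_eq_zero σ m c (ih _ _ hU' hk') hrem

end SkewPolynomial

section SumRank

variable {K F : Type} [Field K] [Field F] [Algebra K F]

theorem rkq_comp_add_finrank_ker_inf (φ : F →ₗ[K] F) {ι : Type} [Finite ι] (v : ι → F) :
    rkq K (φ ∘ v) + Module.finrank K ↥(LinearMap.ker φ ⊓ Submodule.span K (Set.range v))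
      = Module.finrank K (Submodule.span K (Set.range v)) := by
  have := FiniteDimensional.span_of_finite K (Set.finite_range v)
  rw [rkq, Set.range_comp, ← Submodule.map_span]
  exact finrank_map_add_finrank_ker_inf φ _

theorem rkq_row_le_rkqMat {s : ℕ} {ι : Type} [Finite ι] (X : Matrix (Fin s) ι F) (r : Fin s) :
    rkq K (X r) ≤ rkqMat K X := by
  have := FiniteDimensional.span_of_finite K
    (Set.finite_range fun j : ι => fun r : Fin s => X r j)
  have hrow : Set.range (X r)
      = LinearMap.proj (R := K) (φ := fun _ : Fin s => F) r ''
          Set.range fun j : ι => fun r : Fin s => X r j := by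
    rw [← Set.range_comp]
    rfl
  rw [rkq, rkqMat, hrow, ← Submodule.map_span]
  exact Submodule.finrank_map_le _ _

theorem rkqMat_single {s : ℕ} {ι : Type} (r : Fin s) (x : ι → F) :
    rkqMat K (Matrix.of (Pi.single r x)) = rkq K x := by
  have hcols : (fun j : ι => fun r' : Fin s => Matrix.of (Pi.single r x) r' j)
      = LinearMap.single K (fun _ : Fin s => F) r ∘ x := by
    ext j r'
    by_cases h : r' = r
    · subst h; simp
    · simp [h]
  rw [rkqMat, rkq, hcols, Set.range_comp, ← Submodule.map_span]
  have hinj : Function.Injective (LinearMap.single K (fun _ : Fin s => F) r) := by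
    rw [LinearMap.coe_single]
    exact Pi.single_injective r
  exact (Submodule.equivMapOfInjective _ hinj _).finrank_eq.symm

variable {ℓ : ℕ} (nn : Fin ℓ → ℕ)

theorem wtV_row_le_wtM {s : ℕ} (X : Matrix (Fin s) (Σ i : Fin ℓ, Fin (nn i)) F) (r : Fin s) :
    wtV K nn (X r) ≤ wtM K nn X :=
  Finset.sum_le_sum fun i _ => rkq_row_le_rkqMat (Matrix.of fun r μ => X r ⟨i, μ⟩) r

theorem wtM_single {s : ℕ} (r : Fin s) (x : (Σ i : Fin ℓ, Fin (nn i)) → F) :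
    wtM K nn (Matrix.of (Pi.single r x)) = wtV K nn x := by
  refine Finset.sum_congr rfl fun i _ => ?_
  rw [← rkqMat_single r]
  congr 1
  ext r' μ
  by_cases h : r' = r
  · subst h; simp
  · simp [h]

end SumRank

section LinearizedReedSolomon

variable {K F : Type} [Field K] [Field F] [Algebra K F] (σ : F ≃ₐ[K] F)
variable {ℓ : ℕ} (nn : Fin ℓ → ℕ) (aa : Fin ℓ → F) (β : (Σ i : Fin ℓ, Fin (nn i)) → F) {k : ℕ}

noncomputable def blockRootSpace (m : Fin k → F) (i : Fin ℓ) : Submodule K F :=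
  LinearMap.ker (skewEval σ (aa i) (Function.extend Fin.val m 0) k)
    ⊓ Submodule.span K (Set.range fun μ : Fin (nn i) => β ⟨i, μ⟩)

instance finiteDimensional_blockRootSpace (m : Fin k → F) (i : Fin ℓ) :
    FiniteDimensional K (blockRootSpace σ nn aa β m i) :=
  have := FiniteDimensional.span_of_finite K (Set.finite_range fun μ : Fin (nn i) => β ⟨i, μ⟩)
  Submodule.finiteDimensional_inf_right _ _

theorem vecMul_moore_apply (m : Fin k → F) (p : Σ i : Fin ℓ, Fin (nn i)) :
    (m ᵥ* moore (σ : F ≃+* F) nn aa k β) p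
      = skewEval σ (aa p.1) (Function.extend Fin.val m 0) k (β p) := by
  change ∑ j, m j * moore (σ : F ≃+* F) nn aa k β j p = _
  rw [skewEval_apply, ← Fin.sum_univ_eq_sum_range
    (fun j => Function.extend Fin.val m 0 j * (skewOp σ (aa p.1) ^ j) (β p))]
  refine Finset.sum_congr rfl fun j _ => ?_
  rw [Fin.val_injective.extend_apply, ← opev_eq_skewOp_pow_apply]
  rfl

theorem wtV_vecMul_moore_add_sum_finrank_blockRootSpace
    (hβ : ∀ i, LinearIndependent K fun μ : Fin (nn i) => β ⟨i, μ⟩) (m : Fin k → F) :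
    wtV K nn (m ᵥ* moore (σ : F ≃+* F) nn aa k β)
        + ∑ i, Module.finrank K (blockRootSpace σ nn aa β m i) = ∑ i, nn i := by
  rw [wtV, ← Finset.sum_add_distrib]
  refine Finset.sum_congr rfl fun i _ => ?_
  have hblock : (fun μ : Fin (nn i) => (m ᵥ* moore (σ : F ≃+* F) nn aa k β) ⟨i, μ⟩)
      = skewEval σ (aa i) (Function.extend Fin.val m 0) k ∘ fun μ => β ⟨i, μ⟩ :=
    funext fun μ => vecMul_moore_apply σ nn aa β m ⟨i, μ⟩
  rw [hblock, blockRootSpace, rkq_comp_add_finrank_ker_inf, finrank_span_eq_card (hβ i),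
    Fintype.card_fin]

theorem sum_finrank_blockRootSpace_lt (hfix : ∀ x, σ x = x → x ∈ Set.range (algebraMap K F))
    (ha0 : ∀ i, aa i ≠ 0) (haconj : Pairwise fun i j => ¬ SConj (σ : F ≃+* F) (aa i) (aa j))
    {m : Fin k → F} (hm : m ≠ 0) :
    ∑ i, Module.finrank K (blockRootSpace σ nn aa β m i) < k := by
  by_contra! hk
  refine hm (funext fun j => ?_)
  have hcoeff := coeff_eq_zero_of_le_sum_finrank σ hfix aa ha0 haconj k _
    (blockRootSpace σ nn aa β m) (fun i => inf_le_left) hk j j.isLt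
  rwa [Fin.val_injective.extend_apply] at hcoeff

theorem card_le_sum_finrank_blockRootSpace
    (hβ : ∀ i, LinearIndependent K fun μ : Fin (nn i) => β ⟨i, μ⟩) (m : Fin k → F)
    (S : Finset (Σ i : Fin ℓ, Fin (nn i)))
    (hS : ∀ p ∈ S, (m ᵥ* moore (σ : F ≃+* F) nn aa k β) p = 0) :
    S.card ≤ ∑ i, Module.finrank K (blockRootSpace σ nn aa β m i) := by
  classical
  let T i : Finset (Fin (nn i)) := Finset.univ.filter fun μ => ⟨i, μ⟩ ∈ S
  have hST : S = Finset.univ.sigma T := by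
    ext ⟨i, μ⟩
    simp [T]
  rw [hST, Finset.card_sigma]
  refine Finset.sum_le_sum fun i _ => ?_
  have hli : LinearIndependent K fun μ : T i => β ⟨i, μ⟩ :=
    (hβ i).comp _ Subtype.val_injective
  have hspan : Submodule.span K (Set.range fun μ : T i => β ⟨i, μ⟩)
      ≤ blockRootSpace σ nn aa β m i := by
    rw [Submodule.span_le]
    rintro _ ⟨μ, rfl⟩
    refine ⟨?_, Submodule.subset_span ⟨μ, rfl⟩⟩
    have hroot := hS ⟨i, μ⟩ (Finset.mem_filter.mp μ.2).2
    rwa [vecMul_moore_apply] at hroot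
  calc (T i).card = Module.finrank K (Submodule.span K (Set.range fun μ : T i => β ⟨i, μ⟩)) := by
        rw [finrank_span_eq_card hli, Fintype.card_coe]
    _ ≤ _ := Submodule.finrank_mono hspan

theorem le_wtV_vecMul_moore (hfix : ∀ x, σ x = x → x ∈ Set.range (algebraMap K F))
    (ha0 : ∀ i, aa i ≠ 0) (haconj : Pairwise fun i j => ¬ SConj (σ : F ≃+* F) (aa i) (aa j))
    (hβ : ∀ i, LinearIndependent K fun μ : Fin (nn i) => β ⟨i, μ⟩) (hkn : k ≤ ∑ i, nn i)
    {m : Fin k → F} (hm : m ≠ 0) :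
    ∑ i, nn i - k + 1 ≤ wtV K nn (m ᵥ* moore (σ : F ≃+* F) nn aa k β) := by
  have hsum := wtV_vecMul_moore_add_sum_finrank_blockRootSpace σ nn aa β hβ m
  have hroots := sum_finrank_blockRootSpace_lt σ nn aa β hfix ha0 haconj hm
  omega

theorem exists_ne_zero_wtV_vecMul_moore_le
    (hβ : ∀ i, LinearIndependent K fun μ : Fin (nn i) => β ⟨i, μ⟩)
    (hk : 1 ≤ k) (hkn : k ≤ ∑ i, nn i) :
    ∃ m : Fin k → F, m ≠ 0 ∧
      wtV K nn (m ᵥ* moore (σ : F ≃+* F) nn aa k β) ≤ ∑ i, nn i - k + 1 := by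
  obtain ⟨S, -, hS⟩ := Finset.exists_subset_card_eq
    (s := (Finset.univ : Finset (Σ i : Fin ℓ, Fin (nn i)))) (n := k - 1)
    (by simp only [Finset.card_univ, Fintype.card_sigma, Fintype.card_fin]; omega)
  obtain ⟨m, hm, hroots⟩ :=
    Matrix.exists_ne_zero_vecMul_eq_zero_on (moore (σ : F ≃+* F) nn aa k β) S
      (by rw [hS, Fintype.card_fin]; omega)
  have hsum := wtV_vecMul_moore_add_sum_finrank_blockRootSpace σ nn aa β hβ m
  have hcard := card_le_sum_finrank_blockRootSpace σ nn aa β hβ m S hroots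
  exact ⟨m, hm, by omega⟩

end LinearizedReedSolomon

theorem ILRS_minimum_sum_rank_distance_general
    {K F : Type} [Field K] [Field F] [Algebra K F]
    (σ : F ≃+* F)
    (hfix : ∀ x : F, σ x = x ↔ x ∈ Set.range (algebraMap K F))
    {ℓ : ℕ} (nn : Fin ℓ → ℕ) (aa : Fin ℓ → F)
    (ha0 : ∀ i, aa i ≠ 0)
    (haconj : ∀ i j : Fin ℓ, i ≠ j → ¬ SConj σ (aa i) (aa j))
    (β : (Σ i : Fin ℓ, Fin (nn i)) → F)
    (hβ : ∀ i, LinearIndependent K fun μ : Fin (nn i) => β ⟨i, μ⟩)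
    {s : ℕ} (hs : 1 ≤ s) {k n : ℕ} (hn : n = ∑ i, nn i)
    (hk : 1 ≤ k) (hkn : k ≤ n) :
    (∀ M : Matrix (Fin s) (Fin k) F, M ≠ 0 →
        n - k + 1 ≤ wtM K nn (codeword σ nn aa β k M)) ∧
      ∃ M : Matrix (Fin s) (Fin k) F, M ≠ 0 ∧
        wtM K nn (codeword σ nn aa β k M) = n - k + 1 := by
  let σK : F ≃ₐ[K] F := AlgEquiv.ofRingEquiv (f := σ) fun x => (hfix _).2 ⟨x, rfl⟩
  subst hn
  have hlower : ∀ m : Fin k → F, m ≠ 0 → ∑ i, nn i - k + 1 ≤ wtV K nn (m ᵥ* moore σ nn aa k β) :=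
    fun m hm => le_wtV_vecMul_moore σK nn aa β (fun x => (hfix x).1) ha0 haconj hβ hkn hm
  refine ⟨fun M hM => ?_, ?_⟩
  · obtain ⟨r, hr⟩ := Function.ne_iff.mp hM
    exact (hlower _ hr).trans (wtV_row_le_wtM nn (codeword σ nn aa β k M) r)
  · obtain ⟨m, hm, hupper⟩ := exists_ne_zero_wtV_vecMul_moore_le σK nn aa β hβ hk hkn
    refine ⟨Matrix.of (Pi.single ⟨0, hs⟩ m), fun h => hm ?_, ?_⟩
    · exact funext fun j => by simpa using congr_fun (congr_fun h ⟨0, hs⟩) j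
    · rw [codeword, Matrix.of_single_mul, wtM_single]
      exact le_antisymm hupper (hlower m hm)

/-- Minimum sum-rank distance of ILRS codes.
The minimum of `wt_ΣR(M · λ_k(β)_a⃗)` over all nonzero `M ∈ F^{s×k}` is exactly
`n − k + 1`. -/
theorem ILRS_minimum_sum_rank_distance
    {K F : Type} [Field K] [Field F] [Algebra K F] [Fintype K] [Fintype F]
    (σ : F ≃+* F)
    (hfix : ∀ x : F, σ x = x ↔ x ∈ Set.range (algebraMap K F))
    {ℓ : ℕ} (hℓ : 1 ≤ ℓ) (nn : Fin ℓ → ℕ) (aa : Fin ℓ → F)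
    (ha0 : ∀ i, aa i ≠ 0)
    (haconj : ∀ i j : Fin ℓ, i ≠ j → ¬ SConj σ (aa i) (aa j))
    (β : (Σ i : Fin ℓ, Fin (nn i)) → F)
    (hβ : ∀ i, LinearIndependent K fun μ : Fin (nn i) => β ⟨i, μ⟩)
    {s : ℕ} (hs : 1 ≤ s) {k n : ℕ} (hn : n = ∑ i, nn i)
    (hk : 1 ≤ k) (hkn : k ≤ n) :
    (∀ M : Matrix (Fin s) (Fin k) F, M ≠ 0 →
        n - k + 1 ≤ wtM K nn (codeword σ nn aa β k M)) ∧
      ∃ M : Matrix (Fin s) (Fin k) F, M ≠ 0 ∧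
        wtM K nn (codeword σ nn aa β k M) = n - k + 1 :=
  ILRS_minimum_sum_rank_distance_general σ hfix nn aa ha0 haconj β hβ hs hn hk hkn

end Stmt2
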